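/- arXiv:1601.04820 — 2 statements merged into one kernel-verified Lean document; each statement's English description precedes it below -/
import Mathlib

section
/- Suppose each process k in a quorum Qw of size ≥ n - t satisfies wsn(k) ≥ x, each process in a quorum Qr of size ≥ n - t reports its value of wsn, and the reader waits until its own value y satisfies y ≥ max of the reported values. If n > 2t, then y ≥ x. -/
/-- Claim 2 (no overwritten-value read): if every process in a write quorum
Qw has wsn ≥ x, the reader's value y dominates all reports of a read quorum
Qr, and n > 2t, then y ≥ x. -/
theorem no_overwritten_read {α : Type*} [DecidableEq α]
    (P Qw Qr : Finset α) (n t x y : ℕ) (wsn : α → ℕ)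
    (hP : P.card = n) (hnt : 2 * t < n)
    (hQw : Qw ⊆ P) (hQr : Qr ⊆ P)
    (hcw : n - t ≤ Qw.card) (hcr : n - t ≤ Qr.card)
    (hw : ∀ k ∈ Qw, x ≤ wsn k)
    (hr : ∀ k ∈ Qr, wsn k ≤ y) :
    x ≤ y := by
  have hsub : Qw ∪ Qr ⊆ P := Finset.union_subset hQw hQr
  have hcard : (Qw ∪ Qr).card ≤ n := hP ▸ Finset.card_le_card hsub
  have h := Finset.card_inter_add_card_union Qw Qr
  have hpos : 0 < (Qw ∩ Qr).card := by omega
  obtain ⟨k, hk⟩ := Finset.card_pos.mp hpos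
  rw [Finset.mem_inter] at hk
  exact le_trans (hw k hk.1) (hr k hk.2)
end

section
/- Suppose reads return pairs (value, sequence number) and each read's sequence number is obtained from the monotone variable swsn of the reader at return time, where the reader's swsn was set after receiving WRITE(x) from a quorum of n - t processes. If read R1 (returning x) terminates before read R2 (returning y) starts, and n > 2t, then x ≤ y. -/
/-- Claim 3 (no new/old read inversion): read R1 returns x at τ1 after a
quorum Q1 has swsn ≥ x; read R2 starts at τ2 ≥ τ1 and its value y dominates
the swsn values reported at times τ2' k ≥ τ2 by a quorum Q2; if n > 2t and
each swsn_k is monotone in time, then x ≤ y. -/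
theorem no_new_old_inversion {α : Type*} [DecidableEq α]
    (P Q1 Q2 : Finset α) (n t x y τ1 τ2 : ℕ)
    (swsn : α → ℕ → ℕ) (τ2' : α → ℕ)
    (hP : P.card = n) (hnt : 2 * t < n)
    (hQ1 : Q1 ⊆ P) (hQ2 : Q2 ⊆ P)
    (hc1 : n - t ≤ Q1.card) (hc2 : n - t ≤ Q2.card)
    (hmono : ∀ k, Monotone (swsn k))
    (hτ : τ1 ≤ τ2) (hτ' : ∀ k ∈ Q2, τ2 ≤ τ2' k)
    (h1 : ∀ k ∈ Q1, x ≤ swsn k τ1)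
    (h2 : ∀ k ∈ Q2, swsn k (τ2' k) ≤ y) :
    x ≤ y := by
  have hunion : (Q1 ∪ Q2).card ≤ n := hP ▸ Finset.card_le_card (Finset.union_subset hQ1 hQ2)
  have hint : 0 < (Q1 ∩ Q2).card := by
    have := Finset.card_union_add_card_inter Q1 Q2
    omega
  obtain ⟨k, hk⟩ := Finset.card_pos.mp hint
  have hk1 := Finset.mem_of_mem_inter_left hk
  have hk2 := Finset.mem_of_mem_inter_right hk
  calc x ≤ swsn k τ1 := h1 k hk1
    _ ≤ swsn k (τ2' k) := hmono k (le_trans hτ (hτ' k hk2))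
    _ ≤ y := h2 k hk2
end
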